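/- arXiv:2111.08535 — 6 statements merged into one kernel-verified Lean document; each statement's English description precedes it below -/
import Mathlib

section
/- Let b ≥ 2 and let d : Fin b → ℕ satisfy d 0 > d 1 ≥ d 2 ≥ ... ≥ d (b-1) ≥ 1. Define H(D) = max over i in [2,b] of i / (log(d 0) - log(d (i-1))) (using 1-based indexing d_1 > d_2 ≥ ... ≥ d_b), H_2(D) = Σ_{i=2}^{b} 1/(log d_1 - log d_i), and loḡ(b) = 1/2 + Σ_{i=2}^{b} 1/i. Then H(D)/2 ≤ H_2(D) ≤ loḡ(b) · H(D). -/
open Finset in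
/-- For an instance `d 1 > d 2 ≥ ... ≥ d b ≥ 1` (1-based indexing), with
`H(D) = max_{i∈[2:b]} i/(log d₁ - log dᵢ)`, `H₂(D) = Σ_{i=2}^b 1/(log d₁ - log dᵢ)`
and `loḡ(b) = 1/2 + Σ_{i=2}^b 1/i`, we have `H(D)/2 ≤ H₂(D) ≤ loḡ(b)·H(D)`. -/
theorem stmt1 (b : ℕ) (hb : 2 ≤ b) (d : ℕ → ℕ)
    (h12 : d 2 < d 1)
    (hmono : ∀ i ∈ Finset.Icc 2 b, ∀ j ∈ Finset.Icc 2 b, i ≤ j → d j ≤ d i)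
    (hpos : 1 ≤ d b)
    (H H₂ logbar : ℝ)
    (hH : H = (Finset.Icc 2 b).sup' (Finset.nonempty_Icc.mpr hb)
        (fun i => (i : ℝ) / (Real.log (d 1) - Real.log (d i))))
    (hH₂ : H₂ = ∑ i ∈ Finset.Icc 2 b, 1 / (Real.log (d 1) - Real.log (d i)))
    (hlogbar : logbar = 1 / 2 + ∑ i ∈ Finset.Icc 2 b, 1 / (i : ℝ)) :
    H / 2 ≤ H₂ ∧ H₂ ≤ logbar * H := by
  set L : ℕ → ℝ := fun i => Real.log (d 1) - Real.log (d i) with hLdef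
  have h2mem : 2 ∈ Finset.Icc 2 b := Finset.mem_Icc.mpr ⟨le_refl 2, hb⟩
  have hbmem : b ∈ Finset.Icc 2 b := Finset.mem_Icc.mpr ⟨hb, le_refl b⟩
  have hd1 : ∀ i ∈ Finset.Icc 2 b, d i < d 1 := by
    intro i hi
    have h2i : d i ≤ d 2 := hmono 2 h2mem i hi (Finset.mem_Icc.mp hi).1
    omega
  have hdpos : ∀ i ∈ Finset.Icc 2 b, 1 ≤ d i := by
    intro i hi
    have := hmono i hi b hbmem (Finset.mem_Icc.mp hi).2
    omega
  have hLpos : ∀ i ∈ Finset.Icc 2 b, 0 < L i := by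
    intro i hi
    have h1 : (1 : ℝ) ≤ (d i : ℝ) := by exact_mod_cast hdpos i hi
    have h2 : (d i : ℝ) < (d 1 : ℝ) := by exact_mod_cast hd1 i hi
    have := Real.log_lt_log (by linarith) h2
    simp only [hLdef]
    linarith
  have hLmono : ∀ i ∈ Finset.Icc 2 b, ∀ j ∈ Finset.Icc 2 b, i ≤ j → L i ≤ L j := by
    intro i hi j hj hij
    have h1 : (1 : ℝ) ≤ (d j : ℝ) := by exact_mod_cast hdpos j hj
    have hd : (d j : ℝ) ≤ (d i : ℝ) := by exact_mod_cast hmono i hi j hj hij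
    have := Real.log_le_log (by linarith) hd
    simp only [hLdef]
    linarith
  have hHmax : ∀ i ∈ Finset.Icc 2 b, (i : ℝ) / L i ≤ H := by
    intro i hi
    rw [hH]
    exact Finset.le_sup' (fun i : ℕ => (i : ℝ) / (Real.log (d 1) - Real.log (d i))) hi
  have hHpos : 0 < H := by
    have h2 := hHmax 2 h2mem
    have hL2 := hLpos 2 h2mem
    have : (0 : ℝ) < (2 : ℝ) / L 2 := by positivity
    linarith
  constructor
  · -- lower bound
    obtain ⟨i₀, hi₀, hHeq⟩ := Finset.exists_mem_eq_sup' (Finset.nonempty_Icc.mpr hb)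
      (fun i => (i : ℝ) / L i)
    have hHeq' : H = (i₀ : ℝ) / L i₀ := by rw [hH]; exact hHeq
    obtain ⟨hi₀2, hi₀b⟩ := Finset.mem_Icc.mp hi₀
    have hsub : Finset.Icc 2 i₀ ⊆ Finset.Icc 2 b := by
      intro x hx
      rw [Finset.mem_Icc] at hx ⊢
      omega
    have hLi₀ := hLpos i₀ hi₀
    have step1 : ∑ i ∈ Finset.Icc 2 i₀, 1 / L i ≤ H₂ := by
      rw [hH₂]
      apply Finset.sum_le_sum_of_subset_of_nonneg hsub
      intro i hi _
      have := hLpos i hi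
      positivity
    have step2 : ((i₀ : ℝ) - 1) * (1 / L i₀) ≤ ∑ i ∈ Finset.Icc 2 i₀, 1 / L i := by
      have hcard : (Finset.Icc 2 i₀).card = i₀ - 1 := by
        rw [Nat.card_Icc]; omega
      have : ∀ i ∈ Finset.Icc 2 i₀, 1 / L i₀ ≤ 1 / L i := by
        intro i hi
        obtain ⟨hi2, hii₀⟩ := Finset.mem_Icc.mp hi
        have hib : i ∈ Finset.Icc 2 b := hsub hi
        have hLi := hLpos i hib
        exact one_div_le_one_div_of_le hLi (hLmono i hib i₀ hi₀ hii₀)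
      calc ((i₀ : ℝ) - 1) * (1 / L i₀)
          = (Finset.Icc 2 i₀).card • (1 / L i₀) := by
            rw [hcard, nsmul_eq_mul]
            congr 1
            have : (1 : ℕ) ≤ i₀ := by omega
            push_cast [Nat.cast_sub this]
            ring
        _ = ∑ _i ∈ Finset.Icc 2 i₀, 1 / L i₀ := (Finset.sum_const _).symm
        _ ≤ ∑ i ∈ Finset.Icc 2 i₀, 1 / L i := Finset.sum_le_sum this
    have step3 : H / 2 ≤ ((i₀ : ℝ) - 1) * (1 / L i₀) := by
      rw [hHeq']
      have hi₀r : (2 : ℝ) ≤ (i₀ : ℝ) := by exact_mod_cast hi₀2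
      have : (i₀ : ℝ) / 2 ≤ (i₀ : ℝ) - 1 := by linarith
      calc (i₀ : ℝ) / L i₀ / 2 = ((i₀ : ℝ) / 2) * (1 / L i₀) := by ring
        _ ≤ ((i₀ : ℝ) - 1) * (1 / L i₀) := by
            apply mul_le_mul_of_nonneg_right this
            positivity
    linarith
  · -- upper bound
    rw [hH₂, hlogbar]
    have hterm : ∀ i ∈ Finset.Icc 2 b, 1 / L i ≤ (1 / (i : ℝ)) * H := by
      intro i hi
      have hiH := hHmax i hi
      have hLi := hLpos i hi
      have hip : (0 : ℝ) < (i : ℝ) := by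
        have := (Finset.mem_Icc.mp hi).1
        have : (2 : ℝ) ≤ (i : ℝ) := by exact_mod_cast this
        linarith
      rw [div_le_iff₀ hLi] at hiH
      rw [div_le_iff₀ hLi]
      calc (1 : ℝ) = (i : ℝ) * (1 / (i : ℝ)) := by field_simp
        _ ≤ (H * L i) * (1 / (i : ℝ)) := by
            apply mul_le_mul_of_nonneg_right hiH; positivity
        _ = 1 / (i : ℝ) * H * L i := by ring
    calc ∑ i ∈ Finset.Icc 2 b, 1 / L i
        ≤ ∑ i ∈ Finset.Icc 2 b, (1 / (i : ℝ)) * H := Finset.sum_le_sum hterm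
      _ = (∑ i ∈ Finset.Icc 2 b, 1 / (i : ℝ)) * H := by rw [Finset.sum_mul]
      _ ≤ (1 / 2 + ∑ i ∈ Finset.Icc 2 b, 1 / (i : ℝ)) * H := by
          apply mul_le_mul_of_nonneg_right _ hHpos.le
          linarith
end

section
/- In the mixed community setting with communities of sizes d_1 > d_2 ≥ ... ≥ d_m summing to N, the probability of error of the Sample Frequency Maximization algorithm (which outputs the community producing the most samples among t i.i.d. uniform samples from the population, ties broken randomly) satisfies P_e ≤ (m−1)·(1 − (√d_1 − √d_2)²/N)^t. -/
/-!
An error forces `N₁ ≤ Nⱼ` for some `j ≠ 1`, where `Nⱼ` counts the samples from community `j`;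
a union bound leaves `m - 1` such events. For each, `1{N₁ ≤ Nⱼ} ≤ a ^ (Nⱼ - N₁)` for any `a ≥ 1`,
and the right side is a product over the independent samples, so its mean is
`(1 + (a⁻¹ - 1) d₁ / N + (a - 1) dⱼ / N) ^ t`. The choice `a = √(d₁ / d₂)` together with
`dⱼ ≤ d₂` makes the base at most `1 - (√d₁ - √d₂)² / N`. If `d₂ = 0`, the event says that
no sample falls in community 1, which has probability exactly `(1 - d₁ / N) ^ t`.
-/

open Finset

section SampleCounts

variable {α β : Type*} [Fintype α] [DecidableEq β] {t : ℕ}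

lemma PMF.toMeasure_uniformOfFintype_toReal [Nonempty α] [MeasurableSpace α]
    [MeasurableSingletonClass α] (p : α → Prop) [DecidablePred p] :
    ((PMF.uniformOfFintype α).toMeasure {x | p x}).toReal = #{x | p x} / Fintype.card α := by
  rw [PMF.toMeasure_uniformOfFintype_apply _ (Set.toFinite _).measurableSet,
    Fintype.card_subtype, ENNReal.toReal_div]
  simp

lemma card_count_le_count_le_pow (f : α → β) {j k : β} (hjk : j ≠ k) {a : ℝ} (ha : 1 ≤ a) :
    (#{ω : Fin t → α | #{i | f (ω i) = j} ≤ #{i | f (ω i) = k}} : ℝ) ≤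
      (Fintype.card α + (a⁻¹ - 1) * #{x | f x = j} + (a - 1) * #{x | f x = k}) ^ t := by
  set g : α → ℝ := fun x => (if f x = j then a⁻¹ else 1) * (if f x = k then a else 1)
  have hprod (ω : Fin t → α) :
      ∏ i, g (ω i) = a⁻¹ ^ #{i | f (ω i) = j} * a ^ #{i | f (ω i) = k} := by
    simp only [g, prod_mul_distrib, prod_ite, prod_const, one_pow, mul_one]
  have hsum : ∑ x, g x =
      Fintype.card α + (a⁻¹ - 1) * #{x | f x = j} + (a - 1) * #{x | f x = k} := by
    have hg (x : α) : g x =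
        1 + (if f x = j then a⁻¹ - 1 else 0) + (if f x = k then a - 1 else 0) := by
      by_cases hj : f x = j <;> by_cases hk : f x = k <;> simp_all [g]
    simp only [hg, sum_add_distrib, ← sum_filter, sum_const, nsmul_eq_mul, card_univ]
    ring
  rw [← hsum, Fintype.sum_pow, natCast_card_filter]
  refine sum_le_sum fun ω _ => ?_
  rw [hprod]
  split_ifs with hle
  · calc (1 : ℝ) = a⁻¹ ^ #{i | f (ω i) = j} * a ^ #{i | f (ω i) = j} := by
          rw [← mul_pow, inv_mul_cancel₀ (by positivity), one_pow]
      _ ≤ a⁻¹ ^ #{i | f (ω i) = j} * a ^ #{i | f (ω i) = k} := by gcongr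
  · positivity

lemma card_count_le_count_le_sqrt (f : α → β) {j k : β} (hjk : j ≠ k) (b : ℕ)
    (hkb : #{x | f x = k} ≤ b) (hbj : b ≤ #{x | f x = j}) :
    (#{ω : Fin t → α | #{i | f (ω i) = j} ≤ #{i | f (ω i) = k}} : ℝ) ≤
      (Fintype.card α - (√(#{x | f x = j} : ℝ) - √(b : ℝ)) ^ 2) ^ t := by
  have hjα : (#{x | f x = j} : ℝ) ≤ Fintype.card α := mod_cast card_le_univ _
  rcases b.eq_zero_or_pos with rfl | hb
  · have hk (x : α) : f x ≠ k := fun hx =>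
      (filter_eq_empty_iff.1 (card_eq_zero.1 (Nat.le_zero.1 hkb))) (mem_univ x) hx
    have hsub : ({ω : Fin t → α | #{i | f (ω i) = j} ≤ #{i | f (ω i) = k}} : Finset _) ⊆
        Fintype.piFinset fun _ => {x | f x ≠ j} := by
      intro ω hω
      simpa [hk] using hω
    have hcompl : (#{x | f x ≠ j} : ℝ) = Fintype.card α - #{x | f x = j} := by
      rw [eq_sub_iff_add_eq, ← Nat.cast_add, add_comm, card_filter_add_card_filter_not, card_univ]
    calc (#{ω : Fin t → α | #{i | f (ω i) = j} ≤ #{i | f (ω i) = k}} : ℝ)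
        ≤ #{x | f x ≠ j} ^ t :=
          mod_cast (card_le_card hsub).trans_eq (Fintype.card_piFinset_const ..)
      _ = _ := by rw [hcompl, Nat.cast_zero, Real.sqrt_zero, sub_zero, Real.sq_sqrt (by positivity)]
  · set s₀ := √(#{x | f x = j} : ℝ)
    set s₁ := √(b : ℝ)
    have hs₁ : 0 < s₁ := Real.sqrt_pos.2 (mod_cast hb)
    have hs₁₀ : s₁ ≤ s₀ := Real.sqrt_le_sqrt (mod_cast hbj)
    have ha : 1 ≤ s₀ / s₁ := (one_le_div hs₁).2 hs₁₀
    refine (card_count_le_count_le_pow f hjk ha).trans (pow_le_pow_left₀ ?_ ?_ t)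
    · have : 0 ≤ (s₀ / s₁)⁻¹ * #{x | f x = j} := by positivity
      have : 0 ≤ (s₀ / s₁ - 1) * #{x | f x = k} := mul_nonneg (by linarith) (by positivity)
      linarith
    · have hs₀ : 0 < s₀ := hs₁.trans_le hs₁₀
      have hj : ((s₀ / s₁)⁻¹ - 1) * #{x | f x = j} = s₀ * s₁ - s₀ ^ 2 := by
        rw [← Real.sq_sqrt (Nat.cast_nonneg (#{x | f x = j}))]
        field_simp
        ring
      have hk : (s₀ / s₁ - 1) * #{x | f x = k} ≤ s₀ * s₁ - s₁ ^ 2 := calc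
        _ ≤ (s₀ / s₁ - 1) * b := mul_le_mul_of_nonneg_left (mod_cast hkb) (by linarith)
        _ = s₀ * s₁ - s₁ ^ 2 := by
          rw [← Real.sq_sqrt (Nat.cast_nonneg b)]
          field_simp
          ring
      linarith

end SampleCounts

/-- Mixed community setting: a population `Fin N` is partitioned into `m` communities of
sizes `d 0 > d 1 ≥ ... ≥ d (m-1)`. The Sample Frequency Maximization algorithm draws `t`
uniform samples with replacement and outputs a community with the maximal sample count
(any tie-breaking rule `sel` attaining the maximum). Its error probability satisfies
`P_e ≤ (m−1)·(1 − (√d₁ − √d₂)²/N)^t`. -/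
theorem stmt4 (N m t : ℕ) [NeZero N] (hm : 2 ≤ m)
    (comm : Fin N → Fin m) (d : Fin m → ℕ)
    (hd : ∀ j, d j = (Finset.univ.filter (fun x => comm x = j)).card)
    (hord : ∀ j k : Fin m, j ≤ k → d k ≤ d j)
    (sel : (Fin m → ℕ) → Fin m)
    (hsel : ∀ f : Fin m → ℕ, ∀ j, f j ≤ f (sel f)) :
    (((PMF.uniformOfFintype (Fin t → Fin N)).toMeasure)
        {ω | sel (fun j => (Finset.univ.filter (fun i => comm (ω i) = j)).card)
            ≠ ⟨0, by omega⟩}).toReal ≤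
      ((m : ℝ) - 1) *
        (1 - (Real.sqrt (d ⟨0, by omega⟩) - Real.sqrt (d ⟨1, by omega⟩)) ^ 2 / N) ^ t := by
  classical
  set z : Fin m := ⟨0, by omega⟩
  set o : Fin m := ⟨1, by omega⟩
  set count : (Fin t → Fin N) → Fin m → ℕ := fun ω j => #{i | comm (ω i) = j}
  have herr : ({ω | sel (count ω) ≠ z} : Finset _) ⊆
      (univ.erase z).biUnion fun j => {ω | count ω z ≤ count ω j} := by
    intro ω hω
    simp only [mem_biUnion, mem_erase, mem_filter, mem_univ, true_and, and_true] at hω ⊢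
    exact ⟨sel (count ω), hω, hsel _ z⟩
  have hpair (j : Fin m) (hj : j ∈ univ.erase z) :
      (#{ω | count ω z ≤ count ω j} : ℝ) ≤ (N - (√(d z) - √(d o)) ^ 2) ^ t := by
    have hoj : o ≤ j :=
      Fin.le_def.2 (Nat.one_le_iff_ne_zero.2 fun h => (mem_erase.1 hj).1 (Fin.ext h))
    have := card_count_le_count_le_sqrt (t := t) comm (mem_erase.1 hj).1.symm (d o)
      (hd j ▸ hord o j hoj) (hd z ▸ hord z o (by simp [Fin.le_def, z, o]))
    simpa [hd] using this
  rw [PMF.toMeasure_uniformOfFintype_toReal, div_le_iff₀ (by positivity)]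
  calc (#{ω | sel (count ω) ≠ z} : ℝ)
      ≤ ∑ j ∈ univ.erase z, (#{ω | count ω z ≤ count ω j} : ℝ) :=
        mod_cast (card_le_card herr).trans card_biUnion_le
    _ ≤ ∑ j ∈ univ.erase z, (N - (√(d z) - √(d o)) ^ 2) ^ t := sum_le_sum hpair
    _ = _ := by
      simp only [sum_const, card_erase_of_mem (mem_univ _), card_univ, Fintype.card_fun,
        Fintype.card_fin, nsmul_eq_mul]
      rw [Nat.cast_sub (by omega), Nat.cast_pow, Nat.cast_one, one_sub_div (NeZero.ne _), div_pow,
        mul_assoc, div_mul_cancel₀ _ (pow_ne_zero _ (NeZero.ne _))]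
end

section
/- In the separated community setting with community sizes d_1 > d_2 ≥ ... ≥ d_b, the Distinct Samples Successive Rejects algorithm with phase lengths K_r = ⌈(1/loḡ(b)) · (t−b)/(b−r+1)⌉ has probability of error at most (Σ_{r=1}^{b−1} C(d_1, d_{b−r+1})) · exp(−(t−b)/(loḡ(b)·H(D))), where H(D) = max_{i∈[2:b]} i/(log d_1 − log d_i) and loḡ(b) = 1/2 + Σ_{i=2}^b 1/i. -/
/-- `loḡ(b) = 1/2 + Σ_{i=2}^b 1/i`. -/
noncomputable def logbar (b : ℕ) : ℝ := 1 / 2 + ∑ i ∈ Finset.Icc 2 b, 1 / (i : ℝ)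

/-- Cumulative phase lengths of the Successive Rejects schedule:
`K_r = ⌈(1/loḡ(b))·(t−b)/(b−r+1)⌉`. -/
noncomputable def phaseLen (t b r : ℕ) : ℕ :=
  ⌈((t : ℝ) - b) / (logbar b * ((b : ℝ) - r + 1))⌉₊

/-- The number of distinct individuals seen from box `i` (holding population
`Fin (d (i+1))`, communities being 1-indexed by `d`) among its first `k` samples. -/
def distinctCount {b t : ℕ} {d : ℕ → ℕ}
    (ω : (i : Fin b) → Fin t → Fin (d (i.1 + 1))) (i : Fin b) (k : ℕ) : ℕ :=
  (Finset.univ.filter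
    (fun x : Fin (d (i.1 + 1)) => ∃ j : Fin t, j.1 < k ∧ ω i j = x)).card

/-- The set of boxes surviving after `r` elimination phases, where at the end of phase
`r` the rule `E` removes a surviving box minimizing the current count `count r`. -/
def surv {b : ℕ} (E : Finset (Fin b) → (Fin b → ℕ) → Fin b)
    (count : ℕ → Fin b → ℕ) : ℕ → Finset (Fin b)
  | 0 => Finset.univ
  | r + 1 => (surv E count r).erase (E (surv E count r) (count (r + 1)))

open MeasureTheory

theorem card_filter_lt' (n K : ℕ) (h : K ≤ n) :
    (Finset.univ.filter (fun j : Fin n => j.1 < K)).card = K := by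
  have : (Finset.univ.filter (fun j : Fin n => j.1 < K)) =
      Finset.univ.map (Fin.castLEEmb h) := by
    ext j
    simp only [Finset.mem_filter, Finset.mem_univ, true_and, Finset.mem_map]
    constructor
    · intro hj; exact ⟨⟨j.1, hj⟩, rfl⟩
    · rintro ⟨k, rfl⟩; simp [k.2]
  rw [this, Finset.card_map, Finset.card_univ, Fintype.card_fin]

theorem unif_prob' {α : Type*} [Fintype α] [Nonempty α] [MeasurableSpace α]
    [MeasurableSingletonClass α] (s : Finset α) :
    ((PMF.uniformOfFintype α).toMeasure ↑s).toReal = s.card / Fintype.card α := by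
  rw [PMF.toMeasure_apply_finset]
  simp [PMF.uniformOfFintype_apply, Finset.sum_const, ENNReal.toReal_div, div_eq_mul_inv]

theorem union_bound' {α : Type*} [MeasurableSpace α] (μ : Measure α) [IsFiniteMeasure μ]
    {ι : Type*} (R : Finset ι) (A : ι → Set α) (s : Set α) (hs : s ⊆ ⋃ r ∈ R, A r) :
    (μ s).toReal ≤ ∑ r ∈ R, (μ (A r)).toReal := by
  have h1 : μ s ≤ ∑ r ∈ R, μ (A r) :=
    le_trans (measure_mono hs) (measure_biUnion_finset_le R A)
  have h2 : (∑ r ∈ R, μ (A r)) ≠ ⊤ :=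
    ENNReal.sum_ne_top.mpr fun r _ => measure_ne_top μ _
  calc (μ s).toReal ≤ (∑ r ∈ R, μ (A r)).toReal := ENNReal.toReal_mono h2 h1
    _ = ∑ r ∈ R, (μ (A r)).toReal := ENNReal.toReal_sum fun r _ => measure_ne_top μ _

theorem count_prob' (b t K : ℕ) (d : ℕ → ℕ) [hne : ∀ i : Fin b, NeZero (d (i.1 + 1))]
    (hb : 0 < b) (hK : K ≤ t) (S : Finset (Fin (d 1))) :
    (((PMF.uniformOfFintype ((i : Fin b) → Fin t → Fin (d (i.1 + 1)))).toMeasure)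
      {ω | ∀ j : Fin t, j.1 < K → ω ⟨0, hb⟩ j ∈ S}).toReal
      ≤ ((S.card : ℝ) / (d 1)) ^ K := by
  classical
  set box0 : Fin b := ⟨0, hb⟩ with hbox0
  set F : ∀ i : Fin b, Finset (Fin t → Fin (d (i.1 + 1))) := fun i =>
    Finset.univ.filter
      (fun g => ∀ j : Fin t, j.1 < K → i = box0 → (g j).1 ∈ S.image Fin.val) with hF
  have hsub : {ω : (i : Fin b) → Fin t → Fin (d (i.1 + 1)) |
      ∀ j : Fin t, j.1 < K → ω box0 j ∈ S} ⊆ ↑(Fintype.piFinset F) := by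
    intro ω hω
    simp only [Finset.coe_sort_coe, Finset.mem_coe, Fintype.mem_piFinset, hF,
      Finset.mem_filter, Finset.mem_univ, true_and]
    intro i j hj hieq
    subst hieq
    exact Finset.mem_image_of_mem _ (hω j hj)
  have hmono := measure_mono (μ := (PMF.uniformOfFintype
      ((i : Fin b) → Fin t → Fin (d (i.1 + 1)))).toMeasure) hsub
  have hμ := unif_prob' (Fintype.piFinset F)
  have hd : ∀ i : Fin b, 0 < d (i.1 + 1) := fun i => Nat.pos_of_ne_zero (hne i).out
  have hd1 : 0 < d 1 := hd box0
  have hc0 : (F box0).card = S.card ^ K * d 1 ^ (t - K) := by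
    have hEq : F box0 = Fintype.piFinset
        (fun j : Fin t => if j.1 < K then S else Finset.univ) := by
      ext g
      simp only [hF, Finset.mem_filter, Finset.mem_univ, true_and, Fintype.mem_piFinset]
      constructor
      · intro hg j
        by_cases hj : j.1 < K
        · rw [if_pos hj]
          have := hg j hj trivial
          rw [Finset.mem_image] at this
          obtain ⟨x, hx, hxe⟩ := this
          rwa [show x = g j from Fin.val_injective hxe] at hx
        · rw [if_neg hj]; exact Finset.mem_univ _
      · intro hg j hj _
        have := hg j
        rw [if_pos hj] at this
        exact Finset.mem_image_of_mem _ this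
    rw [hEq, Fintype.card_piFinset]
    rw [Finset.prod_apply_ite (h := fun s => Finset.card s)]
    simp only [Finset.prod_const, Finset.card_univ, Fintype.card_fin]
    have h1 := card_filter_lt' t K hK
    have h2 := Finset.card_filter_add_card_filter_not
      (s := (Finset.univ : Finset (Fin t))) (fun j : Fin t => j.1 < K)
    rw [Finset.card_univ, Fintype.card_fin] at h2
    rw [h1, show (Finset.univ.filter (fun j : Fin t => ¬ j.1 < K)).card = t - K by omega]
  have hcother : ∀ i : Fin b, i ≠ box0 → (F i).card = d (i.1 + 1) ^ t := by
    intro i hi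
    have : F i = Finset.univ := by
      rw [hF]
      apply Finset.filter_true_of_mem
      intro g _ j hj hieq
      exact absurd hieq hi
    rw [this, Finset.card_univ, Fintype.card_fun, Fintype.card_fin, Fintype.card_fin]
  calc (((PMF.uniformOfFintype ((i : Fin b) → Fin t → Fin (d (i.1 + 1)))).toMeasure)
      {ω | ∀ j : Fin t, j.1 < K → ω ⟨0, hb⟩ j ∈ S}).toReal
      ≤ (((PMF.uniformOfFintype ((i : Fin b) → Fin t → Fin (d (i.1 + 1)))).toMeasure)
        ↑(Fintype.piFinset F)).toReal := by
        apply ENNReal.toReal_mono (measure_ne_top _ _) hmono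
    _ = (Fintype.piFinset F).card /
        (Fintype.card ((i : Fin b) → Fin t → Fin (d (i.1 + 1)))) := hμ
    _ = ∏ i : Fin b, ((F i).card / ((d (i.1 + 1) : ℝ)) ^ t) := by
        rw [Fintype.card_piFinset, Fintype.card_pi]
        push_cast
        rw [Finset.prod_div_distrib]
        congr 1
        apply Finset.prod_congr rfl
        intro i _
        rw [Fintype.card_fun, Fintype.card_fin, Fintype.card_fin]
        push_cast
        rfl
    _ = ((F box0).card / ((d (box0.1 + 1) : ℝ)) ^ t) := by
        apply Finset.prod_eq_single_of_mem box0 (Finset.mem_univ _)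
        intro i _ hi
        rw [hcother i hi]
        have hdi : (0:ℝ) < (d (i.1 + 1) : ℝ) := by exact_mod_cast hd i
        have : (0:ℝ) < (d (i.1 + 1) : ℝ) ^ t := by positivity
        push_cast
        field_simp
    _ ≤ ((S.card : ℝ) / (d 1)) ^ K := by
        rw [hc0]
        have hdd : (box0 : Fin b).1 + 1 = 1 := rfl
        rw [hdd]
        have ht' : t = (t - K) + K := by omega
        have hd1' : (0:ℝ) < (d 1 : ℝ) := by exact_mod_cast hd1
        rw [div_pow]
        rw [show ((d 1:ℝ))^t = ((d 1:ℝ))^(t-K) * ((d 1:ℝ))^K by rw [← pow_add, ← ht']]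
        push_cast
        rw [div_le_div_iff₀ (by positivity) (by positivity)]
        ring_nf
        apply le_of_eq
        ring

theorem surv_card_ge' {b : ℕ} (E : Finset (Fin b) → (Fin b → ℕ) → Fin b)
    (c : ℕ → Fin b → ℕ) : ∀ r, b - r ≤ (surv E c r).card := by
  intro r
  induction r with
  | zero => simp [surv]
  | succ n ih =>
      have := Finset.pred_card_le_card_erase
        (s := surv E c n) (a := E (surv E c n) (c (n + 1)))
      simp only [surv]
      omega

theorem exists_elim' {b : ℕ} (E : Finset (Fin b) → (Fin b → ℕ) → Fin b)
    (c : ℕ → Fin b → ℕ) (x : Fin b) :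
    ∀ n, x ∉ surv E c n → ∃ r, r < n ∧ x ∈ surv E c r ∧ x ∉ surv E c (r + 1) := by
  intro n
  induction n with
  | zero => intro h; exact absurd (Finset.mem_univ x) h
  | succ n ih =>
      intro h
      by_cases hx : x ∈ surv E c n
      · exact ⟨n, Nat.lt_succ_self n, hx, h⟩
      · obtain ⟨r, hr, h1, h2⟩ := ih hx
        exact ⟨r, hr.trans (Nat.lt_succ_self n), h1, h2⟩

theorem distinct_subset' {b t : ℕ} {d : ℕ → ℕ}
    (ω : (i : Fin b) → Fin t → Fin (d (i.1 + 1))) (i : Fin b) (k m : ℕ)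
    (h : distinctCount ω i k ≤ m) (hm : m ≤ d (i.1 + 1)) :
    ∃ S : Finset (Fin (d (i.1 + 1))), S.card = m ∧
      ∀ j : Fin t, j.1 < k → ω i j ∈ S := by
  obtain ⟨S, hTS, hcard⟩ := Finset.exists_superset_card_eq h
    (by simpa using hm)
  exact ⟨S, hcard, fun j hj =>
    hTS (Finset.mem_filter.mpr ⟨Finset.mem_univ _, ⟨j, hj, rfl⟩⟩)⟩

theorem distinctCount_le' {b t : ℕ} {d : ℕ → ℕ}
    (ω : (i : Fin b) → Fin t → Fin (d (i.1 + 1))) (i : Fin b) (k : ℕ) :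
    distinctCount ω i k ≤ d (i.1 + 1) :=
  le_trans (Finset.card_filter_le _ _) (by rw [Finset.card_univ, Fintype.card_fin])


/-- Separated community setting (`b` boxes, box `i` carrying the single community of
size `d i`, `d 1 > d 2 ≥ ... ≥ d b ≥ 1`): the Distinct Samples Successive Rejects
algorithm, which in phase `r` has sampled each surviving box `K_r = phaseLen t b r`
times and eliminates a surviving box with the fewest distinct individuals seen so far
(for an arbitrary minimizing tie-breaking rule `E`), misidentifies the largest
community (box `0`, i.e. community 1) with probability at most
`(Σ_{r=1}^{b−1} C(d₁, d_{b−r+1}))·exp(−(t−b)/(loḡ(b)·H(D)))`, where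
`H(D) = max_{i∈[2:b]} i/(log d₁ − log dᵢ)`. -/
theorem stmt10 (b t : ℕ) (hb : 2 ≤ b) (ht : b ≤ t) (d : ℕ → ℕ)
    [hne : ∀ i : Fin b, NeZero (d (i.1 + 1))]
    (h12 : d 2 < d 1)
    (hmono : ∀ i ∈ Finset.Icc 2 b, ∀ j ∈ Finset.Icc 2 b, i ≤ j → d j ≤ d i)
    (hpos : 1 ≤ d b)
    (E : Finset (Fin b) → (Fin b → ℕ) → Fin b)
    (hE : ∀ (B : Finset (Fin b)) (f : Fin b → ℕ), B.Nonempty →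
      E B f ∈ B ∧ ∀ i ∈ B, f (E B f) ≤ f i)
    (H : ℝ)
    (hH : H = (Finset.Icc 2 b).sup' (Finset.nonempty_Icc.mpr hb)
        (fun i => (i : ℝ) / (Real.log (d 1) - Real.log (d i)))) :
    (((PMF.uniformOfFintype ((i : Fin b) → Fin t → Fin (d (i.1 + 1)))).toMeasure)
        {ω | (⟨0, by omega⟩ : Fin b) ∉
            surv E (fun r i => distinctCount ω i (phaseLen t b r)) (b - 1)}).toReal ≤
      (∑ r ∈ Finset.Icc 1 (b - 1), (Nat.choose (d 1) (d (b - r + 1)) : ℝ)) *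
        Real.exp (-(((t : ℝ) - b) / (logbar b * H))) := by
  classical
  have hb0 : 0 < b := by omega
  have hd : ∀ i : Fin b, 0 < d (i.1 + 1) := fun i => Nat.pos_of_ne_zero (hne i).out
  have hd1 : 0 < d 1 := by simpa using hd ⟨0, hb0⟩
  -- logbar lower bound
  have hlogbar : (1:ℝ) ≤ logbar b := by
    have h2m : (2:ℕ) ∈ Finset.Icc 2 b := Finset.mem_Icc.mpr ⟨le_refl 2, hb⟩
    have hs := Finset.single_le_sum (f := fun i : ℕ => 1 / (i:ℝ))
      (fun i _ => by positivity) h2m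
    rw [logbar]
    norm_num at hs ⊢
    linarith
  set A : ℕ → Set ((i : Fin b) → Fin t → Fin (d (i.1 + 1))) := fun p =>
    {ω | distinctCount ω ⟨0, hb0⟩ (phaseLen t b p) ≤ d (b - p + 1)} with hA
  -- inclusion in union of per-phase events
  have hincl : {ω : (i : Fin b) → Fin t → Fin (d (i.1 + 1)) | (⟨0, hb0⟩ : Fin b) ∉
        surv E (fun r i => distinctCount ω i (phaseLen t b r)) (b - 1)} ⊆
      ⋃ p ∈ Finset.Icc 1 (b - 1), A p := by
    intro ω hω
    simp only [Set.mem_setOf_eq] at hω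
    set c : ℕ → Fin b → ℕ := fun r i => distinctCount ω i (phaseLen t b r) with hc
    obtain ⟨r, hr, hin, hout⟩ := exists_elim' E c (⟨0, hb0⟩ : Fin b) (b - 1) hω
    have heq : (⟨0, hb0⟩ : Fin b) = E (surv E c r) (c (r + 1)) := by
      by_contra hne'
      exact hout (Finset.mem_erase.mpr ⟨hne', hin⟩)
    have hEp := hE (surv E c r) (c (r + 1)) ⟨_, hin⟩
    have hminall := hEp.2
    have hcard := surv_card_ge' E c r
    have hex : ∃ i ∈ surv E c r, b - (r + 1) ≤ i.1 := by
      by_contra hno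
      push_neg at hno
      have hsubf : surv E c r ⊆
          Finset.univ.filter (fun i : Fin b => i.1 < b - (r + 1)) := fun i hi =>
        Finset.mem_filter.mpr ⟨Finset.mem_univ _, hno i hi⟩
      have hcc := Finset.card_le_card hsubf
      rw [card_filter_lt' b (b - (r + 1)) (by omega)] at hcc
      omega
    obtain ⟨i, hiM, hige⟩ := hex
    have h1 : c (r + 1) (⟨0, hb0⟩ : Fin b) ≤ c (r + 1) i := by
      rw [heq]; exact hminall i hiM
    have h2 : c (r + 1) i ≤ d (i.1 + 1) := distinctCount_le' ω i _
    have h3 : d (i.1 + 1) ≤ d (b - (r + 1) + 1) := by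
      apply hmono _ (Finset.mem_Icc.mpr ⟨by omega, by omega⟩)
        _ (Finset.mem_Icc.mpr ⟨by omega, by omega⟩) (by omega)
    refine Set.mem_biUnion (Finset.mem_Icc.mpr ⟨by omega, by omega⟩ :
      r + 1 ∈ Finset.Icc 1 (b - 1)) ?_
    show distinctCount ω ⟨0, hb0⟩ (phaseLen t b (r + 1)) ≤ d (b - (r + 1) + 1)
    calc distinctCount ω ⟨0, hb0⟩ (phaseLen t b (r + 1)) = c (r + 1) ⟨0, hb0⟩ := rfl
      _ ≤ c (r + 1) i := h1
      _ ≤ d (i.1 + 1) := h2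
      _ ≤ d (b - (r + 1) + 1) := h3
  have step1 := union_bound'
    ((PMF.uniformOfFintype ((i : Fin b) → Fin t → Fin (d (i.1 + 1)))).toMeasure)
    (Finset.Icc 1 (b - 1)) A _ hincl
  refine le_trans step1 ?_
  rw [Finset.sum_mul]
  apply Finset.sum_le_sum
  intro p hp
  rw [Finset.mem_Icc] at hp
  obtain ⟨hp1, hp2⟩ := hp
  -- basic facts about this phase
  set m := d (b - p + 1) with hm
  set K := phaseLen t b p with hKdef
  have hbp2 : 2 ≤ b - p + 1 := by omega
  have hbpb : b - p + 1 ≤ b := by omega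
  have hmd2 : m ≤ d 2 :=
    hmono 2 (Finset.mem_Icc.mpr ⟨le_refl 2, hb⟩)
      _ (Finset.mem_Icc.mpr ⟨hbp2, hbpb⟩) hbp2
  have hmlt : m < d 1 := lt_of_le_of_lt hmd2 h12
  have hm1 : 1 ≤ m := le_trans hpos
    (hmono _ (Finset.mem_Icc.mpr ⟨hbp2, hbpb⟩) b (Finset.mem_Icc.mpr ⟨hb, le_refl b⟩)
      hbpb)
  -- real casts
  have hd1R : (0:ℝ) < (d 1 : ℝ) := by exact_mod_cast hd1
  have hmR : (0:ℝ) < (m : ℝ) := by exact_mod_cast hm1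
  have hmltR : (m : ℝ) < (d 1 : ℝ) := by exact_mod_cast hmlt
  have hpb : p ≤ b := by omega
  have he2 : (2:ℝ) ≤ (b:ℝ) - p + 1 := by
    have : (p:ℝ) + 1 ≤ (b:ℝ) := by exact_mod_cast (by omega : p + 1 ≤ b)
    linarith
  have htb : (0:ℝ) ≤ (t:ℝ) - b := by
    have : (b:ℝ) ≤ (t:ℝ) := by exact_mod_cast ht
    linarith
  have hden : (0:ℝ) < logbar b * ((b:ℝ) - p + 1) := by nlinarith
  -- K ≤ t
  have hKt : K ≤ t := by
    rw [hKdef, phaseLen]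
    rw [Nat.ceil_le]
    calc ((t:ℝ) - b) / (logbar b * ((b:ℝ) - p + 1)) ≤ (t:ℝ) - b :=
          div_le_self htb (by nlinarith)
      _ ≤ (t:ℝ) := by
          have : (0:ℝ) ≤ (b:ℝ) := by positivity
          linarith
  -- per-phase union bound over S
  have hsub2 : A p ⊆ ⋃ S ∈ Finset.powersetCard m (Finset.univ : Finset (Fin (d 1))),
      {ω : (i : Fin b) → Fin t → Fin (d (i.1 + 1)) |
        ∀ j : Fin t, j.1 < K → ω ⟨0, hb0⟩ j ∈ S} := by
    intro ω hω
    rw [hA, Set.mem_setOf_eq] at hω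
    obtain ⟨S, hScard, hSmem⟩ := distinct_subset' ω (⟨0, hb0⟩ : Fin b) K m hω
      (le_of_lt hmlt)
    exact Set.mem_biUnion (Finset.mem_powersetCard_univ.mpr hScard)
      (fun j hj => hSmem j hj)
  have step2 := union_bound'
    ((PMF.uniformOfFintype ((i : Fin b) → Fin t → Fin (d (i.1 + 1)))).toMeasure)
    (Finset.powersetCard m (Finset.univ : Finset (Fin (d 1))))
    _ _ hsub2
  -- the exponential bound on the per-sample probability
  have hL : (0:ℝ) < Real.log (d 1) - Real.log m :=
    sub_pos.mpr (Real.log_lt_log hmR hmltR)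
  have hcast : ((b:ℝ) - p + 1) = ((b - p + 1 : ℕ) : ℝ) := by
    push_cast [Nat.cast_sub hpb]
    ring
  have hHb : ((b - p + 1 : ℕ) : ℝ) / (Real.log (d 1) - Real.log (d (b - p + 1))) ≤ H := by
    rw [hH]
    exact Finset.le_sup' (fun i : ℕ => (i : ℝ) / (Real.log (d 1) - Real.log (d i)))
      (Finset.mem_Icc.mpr ⟨hbp2, hbpb⟩)
  have hHpos : (0:ℝ) < H := by
    apply lt_of_lt_of_le _ hHb
    rw [← hcast]
    apply div_pos (by linarith) hL
  have hKx : ((t:ℝ) - b) / (logbar b * ((b:ℝ) - p + 1)) ≤ (K:ℝ) := by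
    rw [hKdef, phaseLen]
    exact Nat.le_ceil _
  have hKL : ((t:ℝ) - b) / (logbar b * H) ≤ (K:ℝ) * (Real.log (d 1) - Real.log m) := by
    have hcL : ((b:ℝ) - p + 1) ≤ H * (Real.log (d 1) - Real.log m) := by
      rw [hcast]
      rw [div_le_iff₀ hL] at hHb
      exact hHb
    have hx : ((t:ℝ) - b) / (logbar b * H) ≤
        ((t:ℝ) - b) / (logbar b * ((b:ℝ) - p + 1)) * (Real.log (d 1) - Real.log m) := by
      have hlb0 : (0:ℝ) < logbar b := by linarith
      rw [div_mul_eq_mul_div, div_le_div_iff₀ (mul_pos hlb0 hHpos) hden]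
      have key := mul_le_mul_of_nonneg_left hcL
        (mul_nonneg htb hlb0.le)
      ring_nf at key ⊢
      linarith
    calc ((t:ℝ) - b) / (logbar b * H) ≤ _ := hx
      _ ≤ (K:ℝ) * (Real.log (d 1) - Real.log m) :=
        mul_le_mul_of_nonneg_right hKx hL.le
  have hpow : ((m:ℝ) / (d 1)) ^ K ≤ Real.exp (-(((t:ℝ) - b) / (logbar b * H))) := by
    have hfrac : (0:ℝ) < (m:ℝ) / (d 1) := div_pos hmR hd1R
    have : ((m:ℝ) / (d 1)) ^ K = Real.exp ((K:ℝ) * Real.log ((m:ℝ) / (d 1))) := by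
      rw [Real.exp_nat_mul, Real.exp_log hfrac]
    rw [this]
    apply Real.exp_le_exp.mpr
    rw [Real.log_div (ne_of_gt hmR) (ne_of_gt hd1R)]
    have hring : (K:ℝ) * (Real.log m - Real.log (d 1)) =
        -((K:ℝ) * (Real.log (d 1) - Real.log m)) := by ring
    rw [hring]
    linarith [hKL]
  -- put it together
  calc (((PMF.uniformOfFintype ((i : Fin b) → Fin t → Fin (d (i.1 + 1)))).toMeasure)
        (A p)).toReal
      ≤ ∑ S ∈ Finset.powersetCard m (Finset.univ : Finset (Fin (d 1))),
          (((PMF.uniformOfFintype ((i : Fin b) → Fin t → Fin (d (i.1 + 1)))).toMeasure)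
            {ω | ∀ j : Fin t, j.1 < K → ω ⟨0, hb0⟩ j ∈ S}).toReal := step2
    _ ≤ ∑ S ∈ Finset.powersetCard m (Finset.univ : Finset (Fin (d 1))),
          ((m:ℝ) / (d 1)) ^ K := by
        apply Finset.sum_le_sum
        intro S hS
        have hc := Finset.mem_powersetCard_univ.mp hS
        have hcp := count_prob' b t K d hb0 hKt S
        rwa [hc] at hcp
    _ = (Nat.choose (d 1) m : ℝ) * ((m:ℝ) / (d 1)) ^ K := by
        rw [Finset.sum_const, Finset.card_powersetCard, Finset.card_univ,
          Fintype.card_fin, nsmul_eq_mul]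
    _ ≤ (Nat.choose (d 1) m : ℝ) * Real.exp (-(((t:ℝ) - b) / (logbar b * H))) := by
        apply mul_le_mul_of_nonneg_left hpow
        positivity
end

section
/- For community sizes d_1 > d_2 ≥ ... ≥ d_b ≥ 2, define H^c(D) = max_{i∈[2:b]} i·Δ_i^{−2}/d_i with Δ_i = 1/d_i − 1/d_1, and H(D) = max_{i∈[2:b]} i/(log d_1 − log d_i). Then H^c(D) > (d_1·d_b/(d_1 − d_b)) · H(D). -/
/-!
Both maxima are compared at the index `i` attaining `H(D)`. Applying `log t > 1 - 1/t` to
`t = d₁/dᵢ` gives `i / (log d₁ - log dᵢ) < i·d₁/(d₁ - dᵢ)`, while the `i`-th term of `H^c(D)` equals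
`i·d₁²·dᵢ/(d₁ - dᵢ)²`. Since `t ↦ t/(d₁ - t)` is increasing, `d_b/(d₁ - d_b) ≤ dᵢ/(d₁ - dᵢ)`,
which closes the gap.
-/

open Real

lemma div_log_sub_log_lt {k x y : ℝ} (hk : 0 < k) (hy : 0 < y) (hyx : y < x) :
    k / (log x - log y) < k * x / (x - y) := by
  have hx : 0 < x := hy.trans hyx
  have hlog : log (y / x) < y / x - 1 :=
    log_lt_sub_one_of_pos (div_pos hy hx) (div_lt_one hx |>.mpr hyx).ne
  rw [log_div hy.ne' hx.ne'] at hlog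
  have hgap : (x - y) / x < log x - log y := by
    rw [sub_div, div_self hx.ne']
    linarith
  calc k / (log x - log y) < k / ((x - y) / x) :=
        div_lt_div_of_pos_left hk (div_pos (sub_pos.mpr hyx) hx) hgap
    _ = k * x / (x - y) := by rw [div_div_eq_mul_div]

lemma div_sub_self_le_div_sub_self {c y x : ℝ} (hc : 0 ≤ c) (hcy : c ≤ y) (hyx : y < x) :
    c / (x - c) ≤ y / (x - y) := by
  rw [div_le_div_iff₀ (by linarith) (by linarith)]
  nlinarith

lemma inv_sq_inv_sub_inv_div {y x : ℝ} (hy : y ≠ 0) (hx : x ≠ 0) :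
    ((1 / y - 1 / x) ^ 2)⁻¹ / y = x ^ 2 * y / (x - y) ^ 2 := by
  rw [div_sub_div _ _ hy hx, div_pow, inv_div]
  field_simp

lemma mul_div_log_sub_log_lt {k c y x : ℝ} (hk : 0 < k) (hc : 0 < c) (hcy : c ≤ y)
    (hyx : y < x) :
    x * c / (x - c) * (k / (log x - log y)) < k * ((1 / y - 1 / x) ^ 2)⁻¹ / y := by
  have hy : 0 < y := hc.trans_le hcy
  have hx : 0 < x := hy.trans hyx
  calc x * c / (x - c) * (k / (log x - log y))
      < x * c / (x - c) * (k * x / (x - y)) :=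
        mul_lt_mul_of_pos_left (div_log_sub_log_lt hk hy hyx)
          (div_pos (mul_pos hx hc) (by linarith))
    _ ≤ x * y / (x - y) * (k * x / (x - y)) := by
        rw [mul_div_assoc x c, mul_div_assoc x y]
        exact mul_le_mul_of_nonneg_right
          (mul_le_mul_of_nonneg_left (div_sub_self_le_div_sub_self hc.le hcy hyx) hx.le)
          (div_pos (mul_pos hk hx) (sub_pos.mpr hyx)).le
    _ = k * ((1 / y - 1 / x) ^ 2)⁻¹ / y := by
        rw [mul_div_assoc k ((1 / y - 1 / x) ^ 2)⁻¹ y, inv_sq_inv_sub_inv_div hy.ne' hx.ne']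
        field_simp

/-- For community sizes `d 1 > d 2 ≥ ... ≥ d b ≥ 2`, with
`H^c(D) = max_{i∈[2:b]} i·Δᵢ⁻²/dᵢ` where `Δᵢ = 1/dᵢ − 1/d₁`, and
`H(D) = max_{i∈[2:b]} i/(log d₁ − log dᵢ)`, we have
`H^c(D) > (d₁·d_b/(d₁−d_b))·H(D)`. -/
theorem stmt12 (b : ℕ) (hb : 2 ≤ b) (d : ℕ → ℕ)
    (h12 : d 2 < d 1)
    (hmono : ∀ i ∈ Finset.Icc 2 b, ∀ j ∈ Finset.Icc 2 b, i ≤ j → d j ≤ d i)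
    (hpos : 2 ≤ d b)
    (Hc H : ℝ)
    (hHc : Hc = (Finset.Icc 2 b).sup' (Finset.nonempty_Icc.mpr hb)
        (fun i => (i : ℝ) * ((1 / (d i : ℝ) - 1 / (d 1 : ℝ)) ^ 2)⁻¹ / (d i : ℝ)))
    (hH : H = (Finset.Icc 2 b).sup' (Finset.nonempty_Icc.mpr hb)
        (fun i => (i : ℝ) / (Real.log (d 1) - Real.log (d i)))) :
    Hc > ((d 1 : ℝ) * (d b : ℝ) / ((d 1 : ℝ) - (d b : ℝ))) * H := by
  obtain ⟨i, hi, hHi⟩ := Finset.exists_mem_eq_sup' (Finset.nonempty_Icc.mpr hb)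
    (fun i => (i : ℝ) / (Real.log (d 1) - Real.log (d i)))
  obtain ⟨hi2, hib⟩ := Finset.mem_Icc.mp hi
  have hdb : d b ≤ d i := hmono i hi b (Finset.right_mem_Icc.mpr hb) hib
  have hdi : d i < d 1 := (hmono 2 (Finset.left_mem_Icc.mpr hb) i hi hi2).trans_lt h12
  have hterm := mul_div_log_sub_log_lt (k := (i : ℝ)) (by exact_mod_cast (by omega : 0 < i))
    (by exact_mod_cast (by omega : 0 < d b)) (Nat.cast_le.mpr hdb) (Nat.cast_lt.mpr hdi)
  rw [hH, hHi]
  exact hterm.trans_le (hHc ▸ Finset.le_sup' (fun j : ℕ =>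
    (j : ℝ) * ((1 / (d j : ℝ) - 1 / (d 1 : ℝ)) ^ 2)⁻¹ / (d j : ℝ)) hi)
end

section
/- Let d_1 > d_2 ≥ ... ≥ d_b ≥ 1 and fix a ∈ [2:b]. Define the modified instance D^[a] where d_a is replaced by ⌈d_1²/d_a⌉ (so community a becomes the unique largest). Then H_2(D^[a]) ≤ H_2(D), where H_2 of an instance is the sum over all non-maximal communities j of 1/(log(size of largest community) − log d_j). -/
/-!
Write `M = ⌈d₁² / dₐ⌉`. Since `log M ≥ 2 log d₁ - log dₐ`, the gap between the new largest
community and `d₁` is at least the old gap `log d₁ - log dₐ`. Match the term of community `1` on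
the left with the term of community `a` on the right, and every other community with itself:
each left-hand term is at most its partner, because the largest size only grew.
-/

open Real Finset

lemma log_sub_log_le_log_ceil_sq_div_sub_log {m n : ℝ} (hm : 0 < m) (hn : 0 < n) :
    log n - log m ≤ log ⌈n ^ 2 / m⌉₊ - log n := by
  have hx : 0 < n ^ 2 / m := by positivity
  have hlog : log (n ^ 2 / m) = 2 * log n - log m := by
    rw [log_div (by positivity) hm.ne', log_pow]
    push_cast
    ring
  have := log_le_log hx (Nat.le_ceil (n ^ 2 / m))
  linarith

lemma one_div_log_sub_log_le_of_log_le {x y z : ℝ} (hz : 0 < z) (hzx : z < x)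
    (hxy : log x ≤ log y) : 1 / (log y - log z) ≤ 1 / (log x - log z) :=
  one_div_le_one_div_of_le (sub_pos.2 (log_lt_log hz hzx)) (by linarith)

theorem stmt15_general (b : ℕ) (d : ℕ → ℕ)
    (h12 : d 2 < d 1)
    (hmono : ∀ i ∈ Finset.Icc 2 b, ∀ j ∈ Finset.Icc 2 b, i ≤ j → d j ≤ d i)
    (hpos : 1 ≤ d b)
    (a : ℕ) (ha : a ∈ Finset.Icc 2 b) :
    ∑ i ∈ (Finset.Icc 1 b).erase a,
        1 / (Real.log (⌈((d 1 : ℝ) ^ 2 / (d a : ℝ))⌉₊ : ℝ) - Real.log (d i))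
      ≤ ∑ i ∈ Finset.Icc 2 b, 1 / (Real.log (d 1) - Real.log (d i)) := by
  obtain ⟨ha2, hab⟩ := mem_Icc.mp ha
  have hd_pos : ∀ i ∈ Icc 2 b, (0 : ℝ) < d i := fun i hi => by
    have := hmono i hi b (right_mem_Icc.2 (ha2.trans hab)) (mem_Icc.1 hi).2
    exact_mod_cast hpos.trans this
  have hd_lt : ∀ i ∈ Icc 2 b, (d i : ℝ) < d 1 := fun i hi => by
    have := hmono 2 (left_mem_Icc.2 (ha2.trans hab)) i hi (mem_Icc.1 hi).1
    exact_mod_cast this.trans_lt h12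
  have hgap_pos : 0 < log (d 1) - log (d a) := sub_pos.2 (log_lt_log (hd_pos a ha) (hd_lt a ha))
  have hgap :=
    log_sub_log_le_log_ceil_sq_div_sub_log (hd_pos a ha) ((hd_pos a ha).trans (hd_lt a ha))
  have hM : log (d 1) ≤ log ⌈(d 1 : ℝ) ^ 2 / d a⌉₊ := by linarith
  have h1 : 1 ∈ (Icc 1 b).erase a := mem_erase.2 ⟨by omega, mem_Icc.2 ⟨le_rfl, by omega⟩⟩
  have hrest : ((Icc 1 b).erase a).erase 1 = (Icc 2 b).erase a := by
    ext i
    simp only [mem_erase, mem_Icc]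
    omega
  rw [← add_sum_erase _ _ h1, hrest, ← add_sum_erase _ _ ha]
  refine add_le_add ?_ (sum_le_sum fun i hi => ?_)
  · exact one_div_le_one_div_of_le hgap_pos hgap
  · have hi := mem_of_mem_erase hi
    exact one_div_log_sub_log_le_of_log_le (hd_pos i hi) (hd_lt i hi) hM

/-- For `d 1 > d 2 ≥ ... ≥ d b ≥ 1` and `a ∈ [2:b]`, replacing `d a` by `⌈d₁²/dₐ⌉`
(making community `a` the unique largest) does not increase `H₂`:
`Σ_{i∈[1:b], i≠a} 1/(log ⌈d₁²/dₐ⌉ − log dᵢ) ≤ Σ_{i=2}^b 1/(log d₁ − log dᵢ)`. -/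
theorem stmt15 (b : ℕ) (hb : 2 ≤ b) (d : ℕ → ℕ)
    (h12 : d 2 < d 1)
    (hmono : ∀ i ∈ Finset.Icc 2 b, ∀ j ∈ Finset.Icc 2 b, i ≤ j → d j ≤ d i)
    (hpos : 1 ≤ d b)
    (a : ℕ) (ha : a ∈ Finset.Icc 2 b) :
    ∑ i ∈ (Finset.Icc 1 b).erase a,
        1 / (Real.log (⌈((d 1 : ℝ) ^ 2 / (d a : ℝ))⌉₊ : ℝ) - Real.log (d i))
      ≤ ∑ i ∈ Finset.Icc 2 b, 1 / (Real.log (d 1) - Real.log (d i)) :=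
  stmt15_general b d h12 hmono hpos a ha
end

section
/- Suppose d_11 ≤ (1−δ_1)N_1, c_a ≤ (1−δ_2)d_11 for all a ≠ 1 (with 0 < δ_1, δ_2 < 1), and all box sizes are within a factor β > 1 of each other (so N_1 ≤ β N_a). Then Γ := [log(N_1/(N_1−d_11+c_b)) + log((N_a−c_a+d_11+1)/N_a)]/log(N_1/(N_1−d_11+c_a)) satisfies Γ ≤ ((d_11−c_b)/(d_11−c_a)) · (N_1/(N_1−d_11+c_b)) · ((2N_1+N_a)/N_a), and in particular Γ ≤ (2β+1)/(δ_1 δ_2). -/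
/-!
Bound the logarithms in the numerator of `Γ` from above and the one in its denominator from below
by `(x - 1)/x ≤ log x ≤ x - 1`. The resulting quotient of rational functions is the product bound
once `(d₁₁ - cₐ + 1)(N₁ - d₁₁ + c_b) ≤ 2 N₁ (d₁₁ - c_b)`, which holds because `d₁₁ - cₐ ≥ 1`
for integers. Each of the three factors of the product is then controlled by one of the
hypotheses on `δ₁`, `δ₂` and `β`.
-/

open Real

lemma Real.log_div_le_sub_div {x y : ℝ} (hx : 0 < x) (hy : 0 < y) :
    log (x / y) ≤ (x - y) / y := by
  have h := log_le_sub_one_of_pos (div_pos hx hy)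
  rwa [div_sub_one hy.ne'] at h

lemma Real.sub_div_le_log_div {x y : ℝ} (hx : 0 < x) (hy : 0 < y) :
    (x - y) / x ≤ log (x / y) := by
  have h := one_sub_inv_le_log_of_pos (div_pos hx hy)
  rwa [inv_div, one_sub_div hx.ne'] at h

section GammaBound

variable {n a d c b : ℝ}

lemma log_quotient_le_linear_quotient (hb : 0 ≤ b) (hbc : b ≤ c) (hcd : c < d) (hdn : d < n)
    (ha : 0 < a) :
    (log (n / (n - d + b)) + log ((a - c + d + 1) / a)) / log (n / (n - d + c)) ≤
      ((d - b) / (n - d + b) + (d - c + 1) / a) / ((d - c) / n) := by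
  have hn : 0 < n := by linarith
  have hnum₁ : log (n / (n - d + b)) ≤ (d - b) / (n - d + b) := by
    convert log_div_le_sub_div hn (by linarith : 0 < n - d + b) using 2; ring
  have hnum₂ : log ((a - c + d + 1) / a) ≤ (d - c + 1) / a := by
    convert log_div_le_sub_div (by linarith : 0 < a - c + d + 1) ha using 2; ring
  have hden : (d - c) / n ≤ log (n / (n - d + c)) := by
    convert sub_div_le_log_div hn (by linarith : 0 < n - d + c) using 2; ring
  have hnum_nonneg : 0 ≤ (d - b) / (n - d + b) + (d - c + 1) / a :=
    add_nonneg (div_nonneg (by linarith) (by linarith)) (div_nonneg (by linarith) ha.le)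
  exact div_le_div₀ hnum_nonneg (add_le_add hnum₁ hnum₂) (div_pos (by linarith) hn) hden

lemma linear_quotient_le_product (hb : 0 ≤ b) (hbc : b ≤ c) (hcd : c + 1 ≤ d) (hdn : d < n)
    (ha : 0 < a) :
    ((d - b) / (n - d + b) + (d - c + 1) / a) / ((d - c) / n) ≤
      (d - b) / (d - c) * (n / (n - d + b)) * ((2 * n + a) / a) := by
  have hm : 0 < n - d + b := by linarith
  have hkey : (d - c + 1) * (n - d + b) ≤ 2 * (d - b) * n :=
    mul_le_mul (by linarith) (by linarith) hm.le (by linarith)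
  have hproduct : (d - b) / (d - c) * (n / (n - d + b)) * ((2 * n + a) / a) =
      ((d - b) / (n - d + b) + 2 * n * (d - b) / ((n - d + b) * a)) / ((d - c) / n) := by
    have : d - c ≠ 0 := by linarith
    field_simp
    ring
  rw [hproduct]
  gcongr ?_ / _
  · exact div_nonneg (by linarith) (by linarith)
  gcongr (d - b) / (n - d + b) + ?_
  rw [div_le_div_iff₀ ha (mul_pos hm ha)]
  linarith [mul_le_mul_of_nonneg_right hkey ha.le]

lemma product_le_of_proportions {δ₁ δ₂ β : ℝ} (hδ₁ : 0 < δ₁) (hδ₂ : 0 < δ₂) (hb : 0 ≤ b)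
    (hbc : b ≤ c) (hcd : c < d) (hdn : d < n) (ha : 0 < a)
    (h1 : d ≤ (1 - δ₁) * n) (h2 : c ≤ (1 - δ₂) * d) (h3 : n ≤ β * a) :
    (d - b) / (d - c) * (n / (n - d + b)) * ((2 * n + a) / a) ≤ (2 * β + 1) / (δ₁ * δ₂) := by
  have hd_factor : (d - b) / (d - c) ≤ 1 / δ₂ := by
    rw [div_le_div_iff₀ (by linarith) hδ₂]
    nlinarith
  have hn_factor : n / (n - d + b) ≤ 1 / δ₁ := by
    rw [div_le_div_iff₀ (by linarith) hδ₁]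
    nlinarith
  have ha_factor : (2 * n + a) / a ≤ 2 * β + 1 := by
    rw [div_le_iff₀ ha]
    linarith
  calc (d - b) / (d - c) * (n / (n - d + b)) * ((2 * n + a) / a)
      ≤ 1 / δ₂ * (1 / δ₁) * (2 * β + 1) := by
        gcongr
        · exact div_nonneg (by linarith) (by linarith)
        · exact div_nonneg (by linarith) (by linarith)
    _ = (2 * β + 1) / (δ₁ * δ₂) := by field_simp

end GammaBound

theorem stmt17_general (N₁ Nₐ d₁₁ cₐ c_b : ℕ) (δ₁ δ₂ β : ℝ)
    (hδ₁ : 0 < δ₁) (hδ₂ : 0 < δ₂)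
    (hd : 1 ≤ d₁₁) (hNa : 1 ≤ Nₐ) (hcb : c_b ≤ cₐ)
    (h1 : (d₁₁ : ℝ) ≤ (1 - δ₁) * N₁)
    (h2 : (cₐ : ℝ) ≤ (1 - δ₂) * d₁₁)
    (h3 : (N₁ : ℝ) ≤ β * Nₐ)
    (Γ : ℝ)
    (hΓ : Γ = (Real.log ((N₁ : ℝ) / ((N₁ : ℝ) - d₁₁ + c_b)) +
        Real.log (((Nₐ : ℝ) - cₐ + d₁₁ + 1) / Nₐ)) /
        Real.log ((N₁ : ℝ) / ((N₁ : ℝ) - d₁₁ + cₐ))) :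
    Γ ≤ (((d₁₁ : ℝ) - c_b) / ((d₁₁ : ℝ) - cₐ)) * ((N₁ : ℝ) / ((N₁ : ℝ) - d₁₁ + c_b)) *
        ((2 * (N₁ : ℝ) + Nₐ) / Nₐ) ∧
    Γ ≤ (2 * β + 1) / (δ₁ * δ₂) := by
  have hd₀ : (1 : ℝ) ≤ d₁₁ := by exact_mod_cast hd
  have ha : (0 : ℝ) < Nₐ := by exact_mod_cast hNa
  have hbc : (c_b : ℝ) ≤ cₐ := by exact_mod_cast hcb
  have hcd : (cₐ : ℝ) < d₁₁ := by nlinarith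
  have hcd₁ : (cₐ : ℝ) + 1 ≤ d₁₁ := by exact_mod_cast Nat.cast_lt.mp hcd
  have hN₁ : (0 : ℝ) < N₁ := by nlinarith [N₁.cast_nonneg (α := ℝ)]
  have hdn : (d₁₁ : ℝ) < N₁ := by nlinarith [mul_pos hδ₁ hN₁]
  have hproduct := (log_quotient_le_linear_quotient c_b.cast_nonneg hbc hcd hdn ha).trans
    (linear_quotient_le_product c_b.cast_nonneg hbc hcd₁ hdn ha)
  rw [← hΓ] at hproduct
  exact ⟨hproduct,
    hproduct.trans (product_le_of_proportions hδ₁ hδ₂ c_b.cast_nonneg hbc hcd hdn ha h1 h2 h3)⟩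

/-- Under `d₁₁ ≤ (1−δ₁)N₁`, `c_b ≤ cₐ ≤ (1−δ₂)d₁₁`, and `N₁ ≤ β·Nₐ`, the quantity
`Γ = [log(N₁/(N₁−d₁₁+c_b)) + log((Nₐ−cₐ+d₁₁+1)/Nₐ)]/log(N₁/(N₁−d₁₁+cₐ))` satisfies
`Γ ≤ ((d₁₁−c_b)/(d₁₁−cₐ))·(N₁/(N₁−d₁₁+c_b))·((2N₁+Nₐ)/Nₐ)` and
`Γ ≤ (2β+1)/(δ₁δ₂)`. -/
theorem stmt17 (N₁ Nₐ d₁₁ cₐ c_b : ℕ) (δ₁ δ₂ β : ℝ)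
    (hδ₁ : 0 < δ₁) (hδ₁' : δ₁ < 1) (hδ₂ : 0 < δ₂) (hδ₂' : δ₂ < 1) (hβ : 1 < β)
    (hd : 1 ≤ d₁₁) (hNa : 1 ≤ Nₐ) (hcb : c_b ≤ cₐ)
    (h1 : (d₁₁ : ℝ) ≤ (1 - δ₁) * N₁)
    (h2 : (cₐ : ℝ) ≤ (1 - δ₂) * d₁₁)
    (h3 : (N₁ : ℝ) ≤ β * Nₐ)
    (Γ : ℝ)
    (hΓ : Γ = (Real.log ((N₁ : ℝ) / ((N₁ : ℝ) - d₁₁ + c_b)) +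
        Real.log (((Nₐ : ℝ) - cₐ + d₁₁ + 1) / Nₐ)) /
        Real.log ((N₁ : ℝ) / ((N₁ : ℝ) - d₁₁ + cₐ))) :
    Γ ≤ (((d₁₁ : ℝ) - c_b) / ((d₁₁ : ℝ) - cₐ)) * ((N₁ : ℝ) / ((N₁ : ℝ) - d₁₁ + c_b)) *
        ((2 * (N₁ : ℝ) + Nₐ) / Nₐ) ∧
    Γ ≤ (2 * β + 1) / (δ₁ * δ₂) :=
  stmt17_general N₁ Nₐ d₁₁ cₐ c_b δ₁ δ₂ β hδ₁ hδ₂ hd hNa hcb h1 h2 h3 Γ hΓ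
end
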